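/- Let γ = (p₁, ..., pₙ) and γ̃ = (q₁, ..., qₙ) be sequences of points in ℝ², n ≥ 3, such that |p_{i+1} - p_i| = |q_{i+1} - q_i| for all i, each consecutive triple is non-collinear, and the signed angles agree at every interior point: ∠(p_{i-1}, p_i, p_{i+1}) = ∠(q_{i-1}, q_i, q_{i+1}) with the same orientation sign for 1 < i < n. Then there exists a unique g ∈ SE(2) with g(p_i) = q_i for all i. -/

import Mathlib

/-!
The edge vectors `u = p_{i-1} - p_i`, `v = p_{i+1} - p_i` at an interior vertex have
`|u|`, `|v|`, `u · v = |u| |v| cos ∠` and `v × u = sign · √(|u|²|v|² - (u · v)²)` all fixed by the data,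
and a vector is determined by its dot and cross products with a nonzero vector. So once a
direct isometry `f` matches the first edge (it exists since the first edges have equal length),
it preserves dot and cross products of differences and hence matches every next vertex. The same
fact shows that a direct isometry is determined by the images of two distinct points.
-/

noncomputable section

/-- Points of the plane `ℝ²`. -/
abbrev Pt : Type := ℝ × ℝ

/-- Euclidean distance on the plane. -/
def dist2 (p q : Pt) : ℝ := Real.sqrt ((p.1 - q.1) ^ 2 + (p.2 - q.2) ^ 2)

/-- The 2d cross product `u × v = u₁v₂ - u₂v₁`. -/
def cross2 (u v : Pt) : ℝ := u.1 * v.2 - u.2 * v.1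

/-- `f` is a direct isometry of the plane (element of `SE(2)`):
`x ↦ Ax + b` with `A ∈ SO(2)`, `b ∈ ℝ²`. -/
def IsSE2 (f : Pt → Pt) : Prop :=
  ∃ a b c d : ℝ, a ^ 2 + b ^ 2 = 1 ∧
    ∀ x : Pt, f x = (a * x.1 - b * x.2 + c, b * x.1 + a * x.2 + d)

/-- `f` is a Euclidean isometry of the plane (element of `E(2) = O(2) ⋉ ℝ²`):
`x ↦ Ax + b` with `A ∈ O(2)` of determinant `1` or `-1`. -/
def IsE2 (f : Pt → Pt) : Prop :=
  ∃ a b c d : ℝ, a ^ 2 + b ^ 2 = 1 ∧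
    ((∀ x : Pt, f x = (a * x.1 - b * x.2 + c, b * x.1 + a * x.2 + d)) ∨
     (∀ x : Pt, f x = (a * x.1 + b * x.2 + c, b * x.1 - a * x.2 + d)))

/-- The unsigned angle `∠(p₁, p, p₂)` at the vertex `p`. -/
def angAt (p₁ p p₂ : Pt) : ℝ :=
  Real.arccos (((p₁.1 - p.1) * (p₂.1 - p.1) + (p₁.2 - p.2) * (p₂.2 - p.2)) /
    (dist2 p p₁ * dist2 p p₂))

def dot2 (u v : Pt) : ℝ := u.1 * v.1 + u.2 * v.2

lemma dot2_self_eq_zero {u : Pt} : dot2 u u = 0 ↔ u = 0 := by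
  rw [dot2, mul_self_add_mul_self_eq_zero, Prod.ext_iff]
  rfl

lemma dist2_comm (p q : Pt) : dist2 p q = dist2 q p := by
  unfold dist2; ring_nf

lemma dist2_sq (p q : Pt) : dist2 p q ^ 2 = dot2 (p - q) (p - q) := by
  rw [dist2, Real.sq_sqrt (by positivity)]
  simp only [dot2, Prod.fst_sub, Prod.snd_sub]
  ring

lemma dot2_sq_add_cross2_sq (u v : Pt) :
    dot2 u v ^ 2 + cross2 v u ^ 2 = dot2 u u * dot2 v v := by
  simp only [dot2, cross2]; ring

lemma eq_of_dot2_eq_of_cross2_eq {v v' w : Pt} (hw : w ≠ 0)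
    (hdot : dot2 w v = dot2 w v') (hcross : cross2 v w = cross2 v' w) : v = v' := by
  have hw' : dot2 w w ≠ 0 := dot2_self_eq_zero.not.mpr hw
  simp only [dot2, cross2] at hdot hcross hw'
  refine Prod.ext (mul_right_cancel₀ hw' ?_) (mul_right_cancel₀ hw' ?_)
  · linear_combination w.1 * hdot + w.2 * hcross
  · linear_combination w.2 * hdot - w.1 * hcross

lemma Real.eq_of_sq_eq_of_sign_eq {x y : ℝ} (hsq : x ^ 2 = y ^ 2)
    (hsgn : Real.sign x = Real.sign y) : x = y := by
  rcases sq_eq_sq_iff_eq_or_eq_neg.mp hsq with h | rfl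
  · exact h
  · rw [Real.sign_neg, neg_eq_iff_add_eq_zero, ← two_mul, mul_eq_zero,
      Real.sign_eq_zero_iff] at hsgn
    simp only [two_ne_zero, false_or] at hsgn
    simp [hsgn]

section Angle

variable {A B C A' B' C' : Pt}

lemma angAt_eq_arccos :
    angAt A B C = Real.arccos (dot2 (A - B) (C - B) / (dist2 B A * dist2 B C)) := rfl

lemma dot2_sq_add_cross2_sq_eq_dist2_mul_sq :
    dot2 (A - B) (C - B) ^ 2 + cross2 (C - B) (A - B) ^ 2 = (dist2 B A * dist2 B C) ^ 2 := by
  rw [dot2_sq_add_cross2_sq, mul_pow, dist2_comm B A, dist2_comm B C, dist2_sq, dist2_sq]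

lemma dist2_mul_pos_of_cross2_ne_zero (hX : cross2 (C - B) (A - B) ≠ 0) :
    0 < dist2 B A * dist2 B C := by
  refine (mul_nonneg (Real.sqrt_nonneg _) (Real.sqrt_nonneg _)).lt_of_ne'
    fun hP : dist2 B A * dist2 B C = 0 => hX ?_
  have h := dot2_sq_add_cross2_sq_eq_dist2_mul_sq (A := A) (B := B) (C := C)
  rw [hP] at h
  exact pow_eq_zero_iff two_ne_zero |>.mp (by nlinarith [sq_nonneg (dot2 (A - B) (C - B))])

lemma dot2_div_dist2_mul_mem_Icc (hP : 0 < dist2 B A * dist2 B C) :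
    dot2 (A - B) (C - B) / (dist2 B A * dist2 B C) ∈ Set.Icc (-1) 1 := by
  refine abs_le.mp ?_
  rw [abs_div, abs_of_pos hP, div_le_one hP]
  refine abs_le_of_sq_le_sq ?_ hP.le
  nlinarith [dot2_sq_add_cross2_sq_eq_dist2_mul_sq (A := A) (B := B) (C := C),
    sq_nonneg (cross2 (C - B) (A - B))]

lemma dot2_eq_of_angAt_eq (hBA : dist2 B A = dist2 B' A') (hBC : dist2 B C = dist2 B' C')
    (hP : 0 < dist2 B A * dist2 B C) (hang : angAt A B C = angAt A' B' C') :
    dot2 (A - B) (C - B) = dot2 (A' - B') (C' - B') := by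
  have hmem := dot2_div_dist2_mul_mem_Icc hP
  have hmem' := dot2_div_dist2_mul_mem_Icc (A := A') (B := B') (C := C') (hBA ▸ hBC ▸ hP)
  rw [angAt_eq_arccos, angAt_eq_arccos] at hang
  have h := Real.arccos_injOn hmem hmem' hang
  rwa [← hBA, ← hBC, div_left_inj' hP.ne'] at h

lemma dot2_eq_and_cross2_eq_of_angAt_eq (hBA : dist2 B A = dist2 B' A')
    (hBC : dist2 B C = dist2 B' C') (hX : cross2 (C - B) (A - B) ≠ 0)
    (hang : angAt A B C = angAt A' B' C')
    (hsgn : Real.sign (cross2 (C - B) (A - B)) = Real.sign (cross2 (C' - B') (A' - B'))) :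
    dot2 (A - B) (C - B) = dot2 (A' - B') (C' - B') ∧
      cross2 (C - B) (A - B) = cross2 (C' - B') (A' - B') := by
  have hdot := dot2_eq_of_angAt_eq hBA hBC (dist2_mul_pos_of_cross2_ne_zero hX) hang
  refine ⟨hdot, Real.eq_of_sq_eq_of_sign_eq ?_ hsgn⟩
  have h := dot2_sq_add_cross2_sq_eq_dist2_mul_sq (A := A) (B := B) (C := C)
  have h' := dot2_sq_add_cross2_sq_eq_dist2_mul_sq (A := A') (B := B') (C := C')
  rw [hdot, hBA, hBC] at h
  linarith

end Angle

namespace IsSE2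

variable {f : Pt → Pt}

lemma dot2_sub_sub (hf : IsSE2 f) (x y z w : Pt) :
    dot2 (f x - f y) (f z - f w) = dot2 (x - y) (z - w) := by
  obtain ⟨a, b, c, d, hab, hf⟩ := hf
  simp only [dot2, hf, Prod.fst_sub, Prod.snd_sub]
  linear_combination ((x.1 - y.1) * (z.1 - w.1) + (x.2 - y.2) * (z.2 - w.2)) * hab

lemma cross2_sub_sub (hf : IsSE2 f) (x y z w : Pt) :
    cross2 (f x - f y) (f z - f w) = cross2 (x - y) (z - w) := by
  obtain ⟨a, b, c, d, hab, hf⟩ := hf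
  simp only [cross2, hf, Prod.fst_sub, Prod.snd_sub]
  linear_combination ((x.1 - y.1) * (z.2 - w.2) - (x.2 - y.2) * (z.1 - w.1)) * hab

lemma apply_eq_of_dot2_eq_of_cross2_eq (hf : IsSE2 f) {A B C A' B' C' : Pt} (hAB : A ≠ B)
    (hA : f A = A') (hB : f B = B') (hdot : dot2 (A - B) (C - B) = dot2 (A' - B') (C' - B'))
    (hcross : cross2 (C - B) (A - B) = cross2 (C' - B') (A' - B')) : f C = C' := by
  subst hA hB
  have hne : f A - f B ≠ 0 := fun h => hAB <| sub_eq_zero.mp <| dot2_self_eq_zero.mp <| by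
    rw [← hf.dot2_sub_sub, h, dot2_self_eq_zero]
  refine (sub_left_inj (a := f B)).mp (eq_of_dot2_eq_of_cross2_eq hne ?_ ?_)
  · rw [hf.dot2_sub_sub, hdot]
  · rw [hf.cross2_sub_sub, hcross]

lemma ext_of_ne {g : Pt → Pt} (hf : IsSE2 f) (hg : IsSE2 g) {x y : Pt} (hxy : x ≠ y)
    (hx : f x = g x) (hy : f y = g y) : f = g := by
  funext z
  exact hf.apply_eq_of_dot2_eq_of_cross2_eq hxy hx hy (hg.dot2_sub_sub ..).symm
    (hg.cross2_sub_sub ..).symm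

end IsSE2

lemma exists_isSE2_apply_eq {x y x' y' : Pt} (hxy : x ≠ y) (hd : dist2 x y = dist2 x' y') :
    ∃ f, IsSE2 f ∧ f x = x' ∧ f y = y' := by
  set u := x - y
  set u' := x' - y'
  have hL : dot2 u u ≠ 0 := dot2_self_eq_zero.not.mpr (sub_ne_zero.mpr hxy)
  have hL' : dot2 u' u' = dot2 u u := by rw [← dist2_sq, ← dist2_sq, hd]
  -- the rotation is multiplication by the complex number `u' / u`
  set a := dot2 u u' / dot2 u u
  set b := cross2 u u' / dot2 u u
  have hab : a ^ 2 + b ^ 2 = 1 := by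
    have h := dot2_sq_add_cross2_sq u u'
    rw [hL', show cross2 u' u ^ 2 = cross2 u u' ^ 2 by simp only [cross2]; ring] at h
    simp only [a, b]
    field_simp
    linear_combination h
  refine ⟨fun z => (a * z.1 - b * z.2 + (y'.1 - (a * y.1 - b * y.2)),
    b * z.1 + a * z.2 + (y'.2 - (b * y.1 + a * y.2))), ⟨a, b, _, _, hab, fun _ => rfl⟩, ?_, ?_⟩
  · ext
    · simp only [a, b]
      field_simp
      simp only [u, u', dot2, cross2, Prod.fst_sub, Prod.snd_sub] at hL ⊢
      ring
    · simp only [a, b]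
      field_simp
      simp only [u, u', dot2, cross2, Prod.fst_sub, Prod.snd_sub] at hL ⊢
      ring
  · ext <;> ring

theorem signature_inverse_edges_and_signed_angles_general (n : ℕ) (hn : 3 ≤ n)
    (p q : ℕ → Pt)
    (hlen : ∀ i, i + 1 < n → dist2 (p (i + 1)) (p i) = dist2 (q (i + 1)) (q i))
    (hncp : ∀ i, 0 < i → i + 1 < n →
      cross2 (p (i + 1) - p i) (p (i - 1) - p i) ≠ 0)
    (hang : ∀ i, 0 < i → i + 1 < n →
      angAt (p (i - 1)) (p i) (p (i + 1)) = angAt (q (i - 1)) (q i) (q (i + 1)))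
    (hsgn : ∀ i, 0 < i → i + 1 < n →
      Real.sign (cross2 (p (i + 1) - p i) (p (i - 1) - p i)) =
        Real.sign (cross2 (q (i + 1) - q i) (q (i - 1) - q i))) :
    ∃! f : Pt → Pt, IsSE2 f ∧ ∀ i < n, f (p i) = q i := by
  have hncp' (k : ℕ) (hk : k + 2 < n) : cross2 (p (k + 2) - p (k + 1)) (p k - p (k + 1)) ≠ 0 :=
    hncp (k + 1) k.succ_pos hk
  have hne (k : ℕ) (hk : k + 2 < n) : p k ≠ p (k + 1) := fun h =>
    hncp' k hk (by rw [h, sub_self]; simp [cross2])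
  obtain ⟨f, hf, hf1, hf0⟩ := exists_isSE2_apply_eq (hne 0 (by omega)).symm (hlen 0 (by omega))
  have step (k : ℕ) (hk : k + 2 < n) (h0 : f (p k) = q k) (h1 : f (p (k + 1)) = q (k + 1)) :
      f (p (k + 2)) = q (k + 2) := by
    obtain ⟨hdot, hcross⟩ := dot2_eq_and_cross2_eq_of_angAt_eq (hlen k (by omega))
      (by rw [dist2_comm, dist2_comm (q _)]; exact hlen (k + 1) hk) (hncp' k hk)
      (hang (k + 1) k.succ_pos hk) (hsgn (k + 1) k.succ_pos hk)
    exact hf.apply_eq_of_dot2_eq_of_cross2_eq (hne k hk) h0 h1 hdot hcross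
  have hmatch (k : ℕ) (hk : k + 1 < n) : f (p k) = q k ∧ f (p (k + 1)) = q (k + 1) := by
    induction k with
    | zero => exact ⟨hf0, hf1⟩
    | succ k ih => exact ⟨(ih (by omega)).2, step k hk (ih (by omega)).1 (ih (by omega)).2⟩
  refine ⟨f, ⟨hf, fun i hi => ?_⟩, fun g ⟨hg, hgp⟩ => ?_⟩
  · cases i with
    | zero => exact (hmatch 0 (by omega)).1
    | succ i => exact (hmatch i hi).2
  · exact hg.ext_of_ne hf (hne 0 (by omega)) (by rw [hgp 0 (by omega), hf0])
      (by rw [hgp 1 (by omega), hf1])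

/-- Theorem 3.3 (simplest Signature-inverse theorem): two polygonal meshes
`p₀, …, p_{n-1}` and `q₀, …, q_{n-1}` (`n ≥ 3`) with equal corresponding edge
lengths, non-collinear consecutive triples, and equal signed angles (equal
unsigned angles with the same orientation sign) at every interior point are
related by a unique direct isometry of the plane. -/
theorem signature_inverse_edges_and_signed_angles (n : ℕ) (hn : 3 ≤ n)
    (p q : ℕ → Pt)
    (hlen : ∀ i, i + 1 < n → dist2 (p (i + 1)) (p i) = dist2 (q (i + 1)) (q i))
    (hncp : ∀ i, 0 < i → i + 1 < n →
      cross2 (p (i + 1) - p i) (p (i - 1) - p i) ≠ 0)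
    (hncq : ∀ i, 0 < i → i + 1 < n →
      cross2 (q (i + 1) - q i) (q (i - 1) - q i) ≠ 0)
    (hang : ∀ i, 0 < i → i + 1 < n →
      angAt (p (i - 1)) (p i) (p (i + 1)) = angAt (q (i - 1)) (q i) (q (i + 1)))
    (hsgn : ∀ i, 0 < i → i + 1 < n →
      Real.sign (cross2 (p (i + 1) - p i) (p (i - 1) - p i)) =
        Real.sign (cross2 (q (i + 1) - q i) (q (i - 1) - q i))) :
    ∃! f : Pt → Pt, IsSE2 f ∧ ∀ i < n, f (p i) = q i :=
  signature_inverse_edges_and_signed_angles_general n hn p q hlen hncp hang hsgn
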